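/- Let S be a nonempty set, f : S → ℂ, and C₁, C₂ ∈ ℂ such that f(z) = C₁·conj(f(z)) + C₂ for all z ∈ S. Then: (i) if |C₁| ≠ 1, f is constant on S, equal to (C₁·conj(C₂) + C₂)/(1 − |C₁|²); (ii) if |C₁| = 1, there exist real numbers u, v, c with (u,v) ≠ (0,0) such that u·Re(f(z)) + v·Im(f(z)) = c for all z ∈ S, i.e. the image of f lies on a real-affine line in ℂ. -/

import Mathlib

open Complex ComplexConjugate

/-
Conjugating `w = a * conj w + b` gives `conj w = conj a * w + conj b`; substituting back yields
`(1 - |a|²) w = a * conj b + b`, which determines `w` when `|a| ≠ 1`. In any case the real and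
imaginary parts of the equation are two real-linear relations on `(re w, im w)` whose coefficient
vectors `(1 - re a, -im a)` and `(-im a, 1 + re a)` cannot both vanish, so `w` lies on a line.
-/

namespace Complex

variable {a b w : ℂ}

theorem one_sub_norm_sq_mul_eq_of_eq_mul_conj_add (h : w = a * conj w + b) :
    (1 - (‖a‖ : ℂ) ^ 2) * w = a * conj b + b := by
  have hconj : conj w = conj a * w + conj b := by
    conv_lhs => rw [h]
    simp only [map_add, map_mul, conj_conj, mul_comm]
  rw [← mul_conj']
  linear_combination h + a * hconj

theorem eq_div_of_eq_mul_conj_add (h : w = a * conj w + b) (ha : ‖a‖ ≠ 1) :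
    w = (a * conj b + b) / (1 - (‖a‖ : ℂ) ^ 2) := by
  have hden : (1 - (‖a‖ : ℂ) ^ 2) ≠ 0 := by
    rw [sub_ne_zero, ne_comm, ← ofReal_pow, ← ofReal_one, ofReal_inj.ne]
    exact fun hsq => ha ((pow_eq_one_iff_of_nonneg (norm_nonneg a) two_ne_zero).mp hsq)
  rw [eq_div_iff hden, mul_comm]
  exact one_sub_norm_sq_mul_eq_of_eq_mul_conj_add h

theorem re_relation_of_eq_mul_conj_add (h : w = a * conj w + b) :
    (1 - a.re) * w.re - a.im * w.im = b.re := by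
  have hre := congrArg re h
  simp only [add_re, mul_re, conj_re, conj_im] at hre
  linarith

theorem im_relation_of_eq_mul_conj_add (h : w = a * conj w + b) :
    -a.im * w.re + (1 + a.re) * w.im = b.im := by
  have him := congrArg im h
  simp only [add_im, mul_im, conj_re, conj_im] at him
  linarith

theorem exists_line_of_eq_mul_conj_add (a b : ℂ) :
    ∃ u v c : ℝ, (u, v) ≠ (0, 0) ∧ ∀ w : ℂ, w = a * conj w + b → u * w.re + v * w.im = c := by
  by_cases hre : (1 - a.re, -a.im) = ((0 : ℝ), (0 : ℝ))
  · simp only [Prod.mk.injEq, sub_eq_zero, neg_eq_zero] at hre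
    refine ⟨-a.im, 1 + a.re, b.im, ?_, fun w hw => im_relation_of_eq_mul_conj_add hw⟩
    simp only [ne_eq, Prod.mk.injEq, ← hre.1]
    norm_num
  · refine ⟨1 - a.re, -a.im, b.re, hre, fun w hw => ?_⟩
    linarith [re_relation_of_eq_mul_conj_add hw]

end Complex

theorem functional_equation_dichotomy_general {S : Type*} (f : S → ℂ) (C₁ C₂ : ℂ)
    (h : ∀ z : S, f z = C₁ * (starRingEnd ℂ) (f z) + C₂) :
    (‖C₁‖ ≠ 1 →
      ∀ z : S, f z = (C₁ * (starRingEnd ℂ) C₂ + C₂) / (1 - ((‖C₁‖ : ℝ) : ℂ) ^ 2)) ∧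
    (‖C₁‖ = 1 →
      ∃ u v c : ℝ, (u, v) ≠ (0, 0) ∧ ∀ z : S, u * (f z).re + v * (f z).im = c) := by
  refine ⟨fun hC₁ z => eq_div_of_eq_mul_conj_add (h z) hC₁, fun _ => ?_⟩
  obtain ⟨u, v, c, huv, hline⟩ := exists_line_of_eq_mul_conj_add C₁ C₂
  exact ⟨u, v, c, huv, fun z => hline (f z) (h z)⟩

theorem functional_equation_dichotomy {S : Type*} [Nonempty S] (f : S → ℂ) (C₁ C₂ : ℂ)
    (h : ∀ z : S, f z = C₁ * (starRingEnd ℂ) (f z) + C₂) :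
    (‖C₁‖ ≠ 1 →
      ∀ z : S, f z = (C₁ * (starRingEnd ℂ) C₂ + C₂) / (1 - ((‖C₁‖ : ℝ) : ℂ) ^ 2)) ∧
    (‖C₁‖ = 1 →
      ∃ u v c : ℝ, (u, v) ≠ (0, 0) ∧ ∀ z : S, u * (f z).re + v * (f z).im = c) :=
  functional_equation_dichotomy_general f C₁ C₂ h
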